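/- For every real x and all integers k, l ≥ 0 with (k,l) ≠ (0,0): (1/2)·(f_k·h_l + h_k·f_l) = (−1)^{k+l−1}·(V_{k−1,l} + V_{k,l−1}), where V_{k,l} := ∑_{n=0}^{k} (−1)ⁿ·A_{l+n+1, k−n} for k, l ≥ 0 and V_{k,l} := 0 if k = −1 or l = −1. (This is the coefficient formula V^{++}_{kl} = ∑_{n=0}^{k}(−1)ⁿ A_{l+n+1,k−n} in the expansion of V^{++}(z,w).) -/

import Mathlib

/-- `α₀ = 1` and, for `n ≥ 1`, `αₙ = ((-1)ⁿ/(8ⁿ·n!))·∏_{ℓ=1}^{n}(2ℓ-1)²`. -/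
noncomputable def alph (n : ℕ) : ℝ :=
  ((-1) ^ n / (8 ^ n * Nat.factorial n)) * ∏ ℓ ∈ Finset.range n, ((2 * (ℓ : ℝ) + 1)) ^ 2

/-- `f₀ = 1` and `fₙ = (−1)ⁿ·αₙ·xⁿ`. -/
noncomputable def fSeq (x : ℝ) (n : ℕ) : ℝ := (-1) ^ n * alph n * x ^ n

/-- `h₀ = 1` and `hₙ = −(−1)ⁿ·((2n+1)/(2n−1))·αₙ·xⁿ`. -/
noncomputable def hSeq (x : ℝ) (n : ℕ) : ℝ :=
  -((-1) ^ n * ((2 * (n : ℝ) + 1) / (2 * (n : ℝ) - 1)) * alph n * x ^ n)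

/-- `A_{p,q} = ((4pq−1)/((2p−1)(2q−1)))·α_p·α_q·x^{p+q}` for `p, q ≥ 0`. -/
noncomputable def Acoef (x : ℝ) (p q : ℕ) : ℝ :=
  ((4 * (p : ℝ) * (q : ℝ) - 1) / ((2 * (p : ℝ) - 1) * (2 * (q : ℝ) - 1))) *
    alph p * alph q * x ^ (p + q)

/-- `V_{k,l} = ∑_{n=0}^k (−1)ⁿ·A_{l+n+1,k−n}` for `k, l ≥ 0`; `V_{k,l} = 0`
if `k = −1` or `l = −1`. -/
noncomputable def Vcoef (x : ℝ) (k l : ℤ) : ℝ :=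
  if k < 0 ∨ l < 0 then 0
  else ∑ n ∈ Finset.range (k.toNat + 1), (-1 : ℝ) ^ n * Acoef x (l.toNat + n + 1) (k.toNat - n)

/- Expanding the definitions, `(fₖhₗ + hₖfₗ)/2 = (-1)^{k+l-1} A_{k,l}` because
`(2l+1)(2k-1) + (2k+1)(2l-1) = 2(4kl-1)`. On the other side, splitting off the first term of
`V_{k,l}` leaves `-V_{k-1,l+1}`, so `V_{k-1,l+1} + V_{k,l} = A_{l+1,k}`. The remaining boundary
case `V_{k,0} = A_{0,k+1}` is the vanishing of the alternating antidiagonal sum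
`∑ₘ (-1)ᵐ A_{m,k-m}` for `k ≥ 1`, which telescopes with the primitive
`G(m) = (-1)^{m+1} m(2(k-m)+1)/(k(2m-1)) · α_m α_{k-m} xᵏ`, since `G(0) = 0` and
`(-1)ᵏ A_{k,0} = -G(k)`. -/

lemma two_mul_natCast_sub_one_ne_zero (n : ℕ) : 2 * (n : ℝ) - 1 ≠ 0 := by
  have : (2 * n : ℝ) ≠ 1 := by exact_mod_cast (by omega : 2 * n ≠ 1)
  exact sub_ne_zero.mpr this

lemma alph_zero : alph 0 = 1 := by simp [alph]

lemma alph_succ (n : ℕ) :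
    alph (n + 1) = -((2 * (n : ℝ) + 1) ^ 2 / (8 * ((n : ℝ) + 1))) * alph n := by
  rw [alph, alph, Finset.prod_range_succ, pow_succ, pow_succ, Nat.factorial_succ]
  push_cast
  field_simp

lemma Acoef_comm (x : ℝ) (p q : ℕ) : Acoef x p q = Acoef x q p := by
  simp only [Acoef]
  rw [add_comm p q]
  ring

lemma half_fSeq_mul_hSeq_add_hSeq_mul_fSeq (x : ℝ) (k l : ℕ) :
    (1 / 2 : ℝ) * (fSeq x k * hSeq x l + hSeq x k * fSeq x l) =
      -((-1) ^ (k + l) * Acoef x k l) := by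
  have hk := two_mul_natCast_sub_one_ne_zero k
  have hl := two_mul_natCast_sub_one_ne_zero l
  simp only [fSeq, hSeq, Acoef]
  field_simp
  ring

lemma Vcoef_natCast (x : ℝ) (k l : ℕ) :
    Vcoef x k l = ∑ n ∈ Finset.range (k + 1), (-1 : ℝ) ^ n * Acoef x (l + n + 1) (k - n) := by
  simp [Vcoef]

lemma Vcoef_neg_one_right (x : ℝ) (k : ℤ) : Vcoef x k (-1) = 0 := by
  simp [Vcoef]

lemma Vcoef_sub_one_add_Vcoef (x : ℝ) (k l : ℕ) :
    Vcoef x ((k : ℤ) - 1) ((l + 1 : ℕ) : ℤ) + Vcoef x k l = Acoef x (l + 1) k := by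
  rcases k with _ | k
  · simp [Vcoef]
  · rw [show ((k + 1 : ℕ) : ℤ) - 1 = k by omega, Vcoef_natCast, Vcoef_natCast,
      Finset.sum_range_succ' _ (k + 1)]
    have shift : ∀ n ∈ Finset.range (k + 1),
        (-1 : ℝ) ^ (n + 1) * Acoef x (l + (n + 1) + 1) (k + 1 - (n + 1)) =
          -((-1 : ℝ) ^ n * Acoef x (l + 1 + n + 1) (k - n)) := by
      intro n _
      rw [show l + (n + 1) + 1 = l + 1 + n + 1 by omega, Nat.add_sub_add_right]
      ring
    rw [Finset.sum_congr rfl shift, Finset.sum_neg_distrib]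
    simp

noncomputable def antidiagPrimitive (x : ℝ) (k m : ℕ) : ℝ :=
  (-1) ^ m * (-(m : ℝ) * (2 * ((k : ℝ) - m) + 1) / ((k : ℝ) * (2 * (m : ℝ) - 1))) *
    alph m * alph (k - m) * x ^ k

lemma antidiagPrimitive_succ_sub (x : ℝ) {k m : ℕ} (hm : m < k) :
    (-1) ^ m * Acoef x m (k - m) = antidiagPrimitive x k (m + 1) - antidiagPrimitive x k m := by
  obtain ⟨j, rfl⟩ : ∃ j, k = m + j + 1 := ⟨k - m - 1, by omega⟩
  rw [antidiagPrimitive, antidiagPrimitive, Acoef, show m + j + 1 - m = j + 1 by omega,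
    show m + j + 1 - (m + 1) = j by omega, alph_succ, alph_succ]
  have hm : (m : ℝ) * 2 - 1 ≠ 0 := by rw [mul_comm]; exact two_mul_natCast_sub_one_ne_zero m
  have hk : (m : ℝ) + j + 1 ≠ 0 := by positivity
  have hm1 : (m : ℝ) + 1 ≠ 0 := by positivity
  have hj1 : (j : ℝ) + 1 ≠ 0 := by positivity
  have hm2 : 2 * ((m : ℝ) + 1) - 1 ≠ 0 := by linarith [(m.cast_nonneg : (0 : ℝ) ≤ m)]
  have hj2 : ((j : ℝ) + 1) * 2 - 1 ≠ 0 := by linarith [(j.cast_nonneg : (0 : ℝ) ≤ j)]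
  push_cast
  field_simp
  ring

lemma sum_range_neg_one_pow_mul_Acoef_antidiag (x : ℝ) {k : ℕ} (hk : k ≠ 0) :
    ∑ m ∈ Finset.range (k + 1), (-1 : ℝ) ^ m * Acoef x m (k - m) = 0 := by
  have hinit : ∑ m ∈ Finset.range k, (-1 : ℝ) ^ m * Acoef x m (k - m)
      = antidiagPrimitive x k k - antidiagPrimitive x k 0 := by
    rw [← Finset.sum_range_sub]
    exact Finset.sum_congr rfl fun m hm =>
      antidiagPrimitive_succ_sub x (Finset.mem_range.mp hm)
  have hlast : (-1 : ℝ) ^ k * Acoef x k (k - k) = -antidiagPrimitive x k k := by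
    have hk' : (k : ℝ) ≠ 0 := Nat.cast_ne_zero.mpr hk
    have := two_mul_natCast_sub_one_ne_zero k
    rw [Nat.sub_self, Acoef, antidiagPrimitive, Nat.sub_self, alph_zero]
    push_cast
    field_simp
    ring
  rw [Finset.sum_range_succ, hinit, hlast]
  simp [antidiagPrimitive]

lemma Vcoef_zero_right (x : ℝ) (k : ℕ) : Vcoef x k 0 = Acoef x 0 (k + 1) := by
  have h := sum_range_neg_one_pow_mul_Acoef_antidiag x (Nat.succ_ne_zero k)
  rw [Finset.sum_range_succ'] at h
  simp only [Nat.succ_sub_succ, pow_succ, mul_neg_one, neg_mul, Finset.sum_neg_distrib,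
    pow_zero, one_mul, Nat.sub_zero] at h
  rw [show (0 : ℤ) = ((0 : ℕ) : ℤ) from rfl, Vcoef_natCast]
  simp only [zero_add]
  linarith

lemma Vcoef_sub_one_add_Vcoef_sub_one (x : ℝ) {k l : ℕ} (hkl : (k, l) ≠ (0, 0)) :
    Vcoef x ((k : ℤ) - 1) l + Vcoef x k ((l : ℤ) - 1) = Acoef x k l := by
  rcases l with _ | l
  · obtain ⟨k, rfl⟩ : ∃ k', k = k' + 1 := Nat.exists_eq_succ_of_ne_zero (by simpa using hkl)
    simp [Vcoef_neg_one_right, Vcoef_zero_right, Acoef_comm]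
  · rw [Nat.cast_succ, add_sub_cancel_right, ← Nat.cast_succ, Vcoef_sub_one_add_Vcoef,
      Acoef_comm]

/-- Coefficient formula `V^{++}_{kl} = ∑_{n=0}^{k}(−1)ⁿ A_{l+n+1,k−n}` in the
expansion of `V^{++}(z,w)`: for all `k, l ≥ 0` with `(k,l) ≠ (0,0)`,
`(1/2)·(f_k·h_l + h_k·f_l) = (−1)^{k+l−1}·(V_{k−1,l} + V_{k,l−1})`. -/
theorem stmt13 (x : ℝ) (k l : ℕ) (hkl : (k, l) ≠ (0, 0)) :
    (1 / 2 : ℝ) * (fSeq x k * hSeq x l + hSeq x k * fSeq x l) =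
      (-1 : ℝ) ^ (k + l - 1) * (Vcoef x ((k : ℤ) - 1) l + Vcoef x k ((l : ℤ) - 1)) := by
  obtain ⟨n, hn⟩ : ∃ n, k + l = n + 1 :=
    Nat.exists_eq_succ_of_ne_zero fun h => hkl (by simp_all)
  rw [half_fSeq_mul_hSeq_add_hSeq_mul_fSeq, Vcoef_sub_one_add_Vcoef_sub_one x hkl, hn,
    Nat.add_sub_cancel, pow_succ]
  ring
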